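/- In the interval protocol, at every point of the execution, every leader with a strictly positive assigned role believes it can fill that role: for all τ, j ∈ [1..m] and q active in C_τ with lead(q) and role(q) > 0, the count satisfies cnt_j(q) ∈ T(role(q), j). -/

import Mathlib

/-- A transition set: `((p,q), s, (p',q'))` where `s = true` encodes the data
comparison `=` and `s = false` encodes `≠`. -/
abbrev PTrans (Q : Type*) := Set ((Q × Q) × Bool × (Q × Q))

/-- The configuration with a single agent of datum `d` in state `q`. -/
noncomputable def sing {D Q : Type*} (d : D) (q : Q) : D →₀ (Q →₀ ℕ) :=
  Finsupp.single d (Finsupp.single q 1)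

/-- One step of a population protocol with unordered data. -/
def Step {D Q : Type*} (δ : PTrans Q) (C C' : D →₀ (Q →₀ ℕ)) : Prop :=
  ∃ (p q p' q' : Q) (s : Bool) (d e : D),
    ((p, q), s, (p', q')) ∈ δ ∧ (if s then d = e else d ≠ e) ∧
    sing d p + sing e q ≤ C ∧
    C' = C - (sing d p + sing e q) + (sing d p' + sing e q')

/-- Reachability: reflexive-transitive closure of the step relation. -/
def Reach {D Q : Type*} (δ : PTrans Q) : (D →₀ (Q →₀ ℕ)) → (D →₀ (Q →₀ ℕ)) → Prop :=
  Relation.ReflTransGen (Step δ)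

/-- The embedding order on configurations. -/
def Embeds {D Q : Type*} (C C' : D →₀ (Q →₀ ℕ)) : Prop :=
  ∃ ρ : D ↪ D, ∀ d, C d ≤ C' (ρ d)

/-- An execution of the protocol. -/
def IsExec {D Q : Type*} (δ : PTrans Q) (e : ℕ → (D →₀ (Q →₀ ℕ))) : Prop :=
  ∀ i, Step δ (e i) (e (i + 1))

/-- Fairness: any configuration reachable from infinitely many configurations of the
execution occurs infinitely often along the execution. -/
def Fair {D Q : Type*} (δ : PTrans Q) (e : ℕ → (D →₀ (Q →₀ ℕ))) : Prop :=
  ∀ C', {i | Reach δ (e i) C'}.Infinite → {i | e i = C'}.Infinite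

/-- The execution converges to the output value given by the proposition `P`
(`true` if `P` holds, `false` otherwise): from some point on, every agent's state
has that output. -/
def Converges {D Q : Type*} (O : Q → Bool) (e : ℕ → (D →₀ (Q →₀ ℕ))) (P : Prop) : Prop :=
  ∃ τ, ∀ i, τ ≤ i → ∀ d q, 0 < e i d q → (O q = true ↔ P)


/-- A state of the immediate observation protocol for a simple interval predicate with
`n` roles and `m` elements.  `role = none` encodes role `0`, `role = some (true, i)`
encodes role `i+1`, `role = some (false, i)` encodes role `-(i+1)`.  `ctrl = some true`
encodes controller value `1`, `ctrl = some false` encodes `-1`, `ctrl = none` encodes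
`0`. -/
structure IntState (n m : ℕ) where
  init : Fin m
  val : ℕ
  out : Bool
  lead : Bool
  role : Option (Bool × Fin n)
  cnt : Fin m → ℕ
  ctrl : Option Bool
  task : Fin n → Bool
deriving DecidableEq

variable {n m : ℕ}

open Classical in
/-- Update of rule (4): a leader updates its count for element `p.init` to `p.val` and,
if it currently has a positive role whose interval is violated by the new count, it
negates its role. -/
noncomputable def upd4 (r : ℕ) (T : Fin n → Fin m → Set ℕ) (p q : IntState n m) : IntState n m :=
  { q with
    cnt := Function.update q.cnt p.init p.val,
    role := match q.role with
            | some (true, i) => if p.val ∈ T i p.init then some (true, i) else some (false, i)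
            | x => x }

/-- Precondition and update of rule (6). -/
def rule6 (T : Fin n → Fin m → Set ℕ) (p q q' : IntState n m) : Prop :=
  q.lead = true ∧ ∃ i : Fin n, q.role = some (true, i) ∧
    (∃ i' : Fin n, i' ≠ i ∧ p.task i' = false ∧ ∀ j, q.cnt j ∈ T i' j) ∧
    q' = { q with role := some (false, i) }

/-- Precondition and update of rule (7). -/
def rule7 (p q q' : IntState n m) : Prop :=
  ∃ (b : Bool) (i : Fin n), p.role = some (b, i) ∧ q.ctrl = some true ∧
    q' = { q with task := Function.update q.task i b }

/-- Precondition and update of rule (8). -/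
def rule8 (p q q' : IntState n m) : Prop :=
  p.ctrl = some true ∧ (∃ i : Fin n, q.role = some (false, i) ∧ p.task i = false) ∧
    q' = { q with role := none }

/-- Precondition and update of rule (11). -/
def rule11 (p q q' : IntState n m) : Prop :=
  p.ctrl = some true ∧ q' = { q with out := decide (∀ i, p.task i = true) }

/-- The transitions of the interval protocol: rules (1)–(11) with mirror variants for
the starred rules, together with the implicit identity transitions.  The Boolean `s`
is `true` for the color precondition `d₁ = d₂` and `false` for `d₁ ≠ d₂`. -/
def IntRule (r : ℕ) (T : Fin n → Fin m → Set ℕ) :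
    ((IntState n m × IntState n m) × Bool × (IntState n m × IntState n m)) → Prop :=
  fun t =>
  let p := t.1.1; let q := t.1.2; let s := t.2.1; let p' := t.2.2.1; let q' := t.2.2.2
  -- implicit identity transitions
  (p' = p ∧ q' = q) ∨
  -- (1) leader election
  (s = true ∧ p.lead = true ∧ q.lead = true ∧ p' = p ∧
    q' = { q with lead := false, role := q.role.map fun x => (false, x.2) }) ∨
  -- (2) controller election
  (p.ctrl = some true ∧ q.ctrl = some true ∧ p' = p ∧
    q' = { q with ctrl := some false }) ∨
  -- (3) tower counting
  (s = true ∧ p.init = q.init ∧ q.val = p.val ∧ p.val < r ∧ p' = p ∧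
    q' = { q with val := q.val + 1 }) ∨
  -- (4) leader collects counts (with mirror)
  (s = true ∧ q.cnt p.init < p.val ∧ q.lead = true ∧ p' = p ∧ q' = upd4 r T p q) ∨
  (q.cnt q.init < q.val ∧ q.lead = true ∧ p' = p ∧ q' = upd4 r T q q) ∨
  -- (5) role selection
  (q.lead = true ∧ q.role = none ∧
    (∃ i : Fin n, (∀ j, q.cnt j ∈ T i j) ∧ q' = { q with role := some (true, i) }) ∧
    p' = p) ∨
  -- (6) role self-reassignment (with mirror)
  (p.ctrl = some true ∧ p' = p ∧ rule6 T p q q') ∨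
  (q.ctrl = some true ∧ p' = p ∧ rule6 T q q q') ∨
  -- (7) task update (with mirror)
  (p' = p ∧ rule7 p q q') ∨
  (p' = p ∧ rule7 q q q') ∨
  -- (8) role reset (with mirror)
  (p' = p ∧ rule8 p q q') ∨
  (p' = p ∧ rule8 q q q') ∨
  -- (9) task reset by a negative controller
  (p.ctrl = some false ∧ q.ctrl = some true ∧ p' = p ∧
    q' = { q with task := fun _ => false }) ∨
  -- (10) negative controller leaves
  (p.ctrl = some true ∧ q.ctrl = some false ∧ (∀ i, p.task i = false) ∧ p' = p ∧
    q' = { q with ctrl := none }) ∨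
  -- (11) output propagation (with mirror)
  (p' = p ∧ rule11 p q q') ∨
  (p' = p ∧ rule11 q q q')

/-- The transition set of the interval protocol. -/
def intDelta (r : ℕ) (T : Fin n → Fin m → Set ℕ) : PTrans (IntState n m) :=
  {t | IntRule r T t}

/-- The initial state of an agent holding element `j`: value `1`, leader, controller
value `1`, role `0`, counts `1` for its own element and `0` otherwise, all tasks
unassigned, output `false`. -/
def intInit (j : Fin m) : IntState n m :=
  ⟨j, 1, false, true, none, fun j' => if j' = j then 1 else 0, some true, fun _ => false⟩

/-- The number of agents of `C` whose state satisfies `S`. -/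
noncomputable def cardB {D Q : Type*} (S : Q → Bool) (C : D →₀ (Q →₀ ℕ)) : ℕ :=
  C.sum fun _ f => f.sum fun q c => if S q then c else 0

/-- The invariant: a state with a positive role has all counts in the intervals. -/
def RoleInv (T : Fin n → Fin m → Set ℕ) (q : IntState n m) : Prop :=
  ∀ i : Fin n, q.role = some (true, i) → ∀ j, q.cnt j ∈ T i j

lemma roleInv_upd4 {r : ℕ} {T : Fin n → Fin m → Set ℕ} {p q : IntState n m}
    (hq : RoleInv T q) : RoleInv T (upd4 r T p q) := by
  intro i hi j
  simp only [upd4] at hi ⊢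
  split at hi
  case h_1 i' heq =>
    split_ifs at hi with hmem
    · simp only [Option.some.injEq, Prod.mk.injEq, true_and] at hi
      rw [← hi]
      by_cases hj : j = p.init
      · subst hj; simpa [Function.update] using hmem
      · simpa [Function.update, hj] using hq i' heq j
    · simp at hi
  case h_2 x hne =>
    exact absurd hi (hne i)

lemma roleInv_rule {r : ℕ} {T : Fin n → Fin m → Set ℕ} {p q p' q' : IntState n m} {s : Bool}
    (h : IntRule r T ((p, q), s, (p', q'))) (hp : RoleInv T p) (hq : RoleInv T q) :
    RoleInv T p' ∧ RoleInv T q' := by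
  dsimp only [IntRule] at h
  rcases h with ⟨rfl, rfl⟩ | ⟨-, -, -, rfl, rfl⟩ | ⟨-, -, rfl, rfl⟩ | ⟨-, -, -, -, rfl, rfl⟩ |
    ⟨-, -, -, rfl, rfl⟩ | ⟨-, -, rfl, rfl⟩ | ⟨-, -, ⟨i0, hT, rfl⟩, rfl⟩ | ⟨-, rfl, h6⟩ |
    ⟨-, rfl, h6⟩ | ⟨rfl, h7⟩ | ⟨rfl, h7⟩ | ⟨rfl, h8⟩ | ⟨rfl, h8⟩ | ⟨-, -, rfl, rfl⟩ |
    ⟨-, -, -, rfl, rfl⟩ | ⟨rfl, h11⟩ | ⟨rfl, h11⟩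
  · exact ⟨hp, hq⟩
  · refine ⟨hp, fun i hi j => ?_⟩
    rcases h : q.role with _ | x <;> simp [h] at hi
  · exact ⟨hp, fun i hi j => hq i (by simpa using hi) j⟩
  · exact ⟨hp, fun i hi j => hq i (by simpa using hi) j⟩
  · exact ⟨hp, roleInv_upd4 hq⟩
  · exact ⟨hp, roleInv_upd4 hq⟩
  · refine ⟨hp, fun i hi j => ?_⟩
    simp only [Option.some.injEq, Prod.mk.injEq, true_and] at hi
    subst hi; exact hT j
  · obtain ⟨-, i0, -, -, rfl⟩ := h6
    exact ⟨hp, fun i hi j => by simp at hi⟩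
  · obtain ⟨-, i0, -, -, rfl⟩ := h6
    exact ⟨hp, fun i hi j => by simp at hi⟩
  · obtain ⟨b, i0, -, -, rfl⟩ := h7
    exact ⟨hp, fun i hi j => hq i (by simpa using hi) j⟩
  · obtain ⟨b, i0, -, -, rfl⟩ := h7
    exact ⟨hp, fun i hi j => hq i (by simpa using hi) j⟩
  · obtain ⟨-, -, rfl⟩ := h8
    exact ⟨hp, fun i hi j => by simp at hi⟩
  · obtain ⟨-, -, rfl⟩ := h8
    exact ⟨hp, fun i hi j => by simp at hi⟩
  · exact ⟨hp, fun i hi j => hq i (by simpa using hi) j⟩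
  · exact ⟨hp, fun i hi j => hq i (by simpa using hi) j⟩
  · obtain ⟨-, rfl⟩ := h11
    exact ⟨hp, fun i hi j => hq i (by simpa using hi) j⟩
  · obtain ⟨-, rfl⟩ := h11
    exact ⟨hp, fun i hi j => hq i (by simpa using hi) j⟩

lemma sing_pos {D Q : Type*} {a : D} {b : Q} {x : D} {y : Q}
    (h : 0 < sing a b x y) : y = b := by
  classical
  rcases eq_or_ne a x with rfl | hax
  · rw [sing, Finsupp.single_eq_same, Finsupp.single_apply] at h
    by_contra hne
    rw [if_neg (Ne.symm hne)] at h
    exact absurd h (lt_irrefl 0)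
  · rw [sing, Finsupp.single_eq_of_ne' hax] at h
    simp at h

lemma roleStep_inv {D : Type*} {r : ℕ} {T : Fin n → Fin m → Set ℕ}
    {C C' : D →₀ (IntState n m →₀ ℕ)}
    (h : Step (intDelta r T) C C') (hC : ∀ d q, 0 < C d q → RoleInv T q) :
    ∀ d q, 0 < C' d q → RoleInv T q := by
  obtain ⟨p, q0, p', q', s, d1, d2, hδ, -, hle, rfl⟩ := h
  have hp0 : 0 < C d1 p := by
    have h1 := (Finsupp.le_def.mp ((Finsupp.le_def.mp hle) d1)) p
    simp only [Finsupp.add_apply] at h1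
    have h2 : 0 < sing d1 p d1 p := by simp [sing]
    omega
  have hq0 : 0 < C d2 q0 := by
    have h1 := (Finsupp.le_def.mp ((Finsupp.le_def.mp hle) d2)) q0
    simp only [Finsupp.add_apply] at h1
    have h2 : 0 < sing d2 q0 d2 q0 := by simp [sing]
    omega
  have hiv := roleInv_rule (hδ : IntRule r T ((p, q0), s, (p', q'))) (hC d1 p hp0) (hC d2 q0 hq0)
  intro d q hq
  have hval : 0 < C d q - (sing d1 p + sing d2 q0) d q
      + ((sing d1 p') d q + (sing d2 q') d q) := by
    simpa [Finsupp.add_apply, Finsupp.tsub_apply] using hq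
  have : 0 < C d q - (sing d1 p + sing d2 q0) d q ∨ 0 < (sing d1 p') d q ∨
      0 < (sing d2 q') d q := by omega
  rcases this with h1 | h1 | h1
  · exact hC d q (lt_of_lt_of_le h1 (Nat.sub_le _ _))
  · rw [sing_pos h1]; exact hiv.1
  · rw [sing_pos h1]; exact hiv.2

/-- At every point of any execution of the interval protocol from an initial
configuration, every leader with a strictly positive assigned role `i` believes it can
fill that role: all its counts lie in the corresponding intervals, i.e.
`cnt_j(q) ∈ T(i, j)` for every element `j`. -/
theorem int_positive_role_correct {D : Type*} (r : ℕ) (T : Fin n → Fin m → Set ℕ)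
    (e : ℕ → (D →₀ (IntState n m →₀ ℕ)))
    (h0 : ∀ d q, 0 < e 0 d q → ∃ j, q = intInit j)
    (hexec : IsExec (intDelta r T) e)
    (τ : ℕ) (d : D) (q : IntState n m) (hq : 0 < e τ d q)
    (hlead : q.lead = true) (i : Fin n) (hrole : q.role = some (true, i)) :
    ∀ j, q.cnt j ∈ T i j := by
  have key : ∀ τ d q, 0 < e τ d q → RoleInv T q := by
    intro τ
    induction τ with
    | zero =>
      intro d q h
      obtain ⟨j, rfl⟩ := h0 d q h
      intro i hi
      simp [intInit] at hi
    | succ k ih => exact roleStep_inv (hexec k) ih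
  exact key τ d q hq i hrole
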